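/- arXiv:2009.00755 — 2 statements merged into one kernel-verified Lean document; each statement's English description precedes it below -/
import Mathlib

section
/- Let T be a Turning Machine of length n whose initial configuration has pos(m_i)=(i,0) for all i and nonnegative initial states, and let c be any reachable configuration of T. Then for every 1 ≤ k ≤ n−2 there is a unique integer t_k with −2 ≤ t_k ≤ 2 such that d_k = ρ^{t_k}(d_{k−1}) in c (where d_k is the direction of m_k), and for all 0 ≤ i < j ≤ n−2 one has Δs(m_j) − Δs(m_i) = Σ_{k=i+1}^{j} t_k (the integers t_k are the turn angles in units of π/3). -/
namespace TuringMachineFolding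

/-- Points of the triangular grid, coordinatised by `ℤ × ℤ`. -/
abbrev Pt : Type := ℤ × ℤ

/-- The six triangular-grid unit vectors `x, y, w, -x, -y, -w`. -/
def unitVecs : Set Pt :=
  {((1 : ℤ), (0 : ℤ)), (0, 1), (-1, 1), (-1, 0), (0, -1), (1, -1)}

/-- Anticlockwise rotation by `π/3`: the linear map with `ρ(1,0) = (0,1)`, `ρ(0,1) = (-1,1)`. -/
def rot : Pt → Pt := fun p => (-p.2, p.1 + p.2)

/-- Clockwise rotation by `π/3`, the inverse of `rot`. -/
def rotInv : Pt → Pt := fun p => (p.1 + p.2, -p.1)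

/-- `rot` as a permutation of the grid, so that integer powers `rotE ^ t` make sense. -/
def rotE : Equiv.Perm Pt where
  toFun := rot
  invFun := rotInv
  left_inv := by
    rintro ⟨a, b⟩
    simp only [rot, rotInv, Prod.mk.injEq]
    constructor <;> ring
  right_inv := by
    rintro ⟨a, b⟩
    simp only [rot, rotInv, Prod.mk.injEq]
    constructor <;> ring

/-- Scalar multiple of a grid vector. -/
def zsmulPt (m : ℤ) (p : Pt) : Pt := (m * p.1, m * p.2)

/-- A configuration of a Turning Machine of length `n`: states and positions of the monomers
`m_0, …, m_{n-1}` (indices `≥ n` carry irrelevant junk values), such that `pos m_0 = (0,0)`,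
consecutive positions differ by one of the six unit vectors, and positions are pairwise
distinct. -/
structure Config (n : ℕ) where
  st : ℕ → ℤ
  pos : ℕ → Pt
  pos_zero : pos 0 = (0, 0)
  step_unit : ∀ i, i + 1 < n → pos (i + 1) - pos i ∈ unitVecs
  pos_inj : ∀ i < n, ∀ j < n, pos i = pos j → i = j

/-- The direction of monomer `m_i` (meaningful for `i + 1 < n`). -/
def dir {n : ℕ} (c : Config n) (i : ℕ) : Pt := c.pos (i + 1) - c.pos i

/-- The translation vector applied to the head of `m_i` when the turning rule fires at `m_i`:
`ρ²(d_i)` for a positive state, `ρ⁻²(d_i)` for a negative state. -/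
def delta {n : ℕ} (c : Config n) (i : ℕ) : Pt :=
  if 0 < c.st i then rot (rot (dir c i)) else rotInv (rotInv (dir c i))

/-- The state sequence after applying the turning rule at monomer `i`. -/
def nextSt {n : ℕ} (c : Config n) (i : ℕ) : ℕ → ℤ := fun j =>
  if j = i then (if 0 < c.st i then c.st i - 1 else c.st i + 1) else c.st j

/-- The position sequence after applying the turning rule at monomer `i`. -/
def nextPos {n : ℕ} (c : Config n) (i : ℕ) : ℕ → Pt := fun j =>
  if i < j then c.pos j + delta c i else c.pos j

/-- The turning rule applied at monomer `i` transforms `c` into `c'`.  The requirement that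
`c'` is again a `Config` (pairwise distinct positions) encodes that the move is not blocked. -/
def StepAt {n : ℕ} (c : Config n) (i : ℕ) (c' : Config n) : Prop :=
  i < n ∧ c.st i ≠ 0 ∧ (∀ j < n, c'.st j = nextSt c i j) ∧ (∀ j < n, c'.pos j = nextPos c i j)

/-- The turning rule is applicable to monomer `i` in configuration `c`. -/
def Applicable {n : ℕ} (c : Config n) (i : ℕ) : Prop := ∃ c', StepAt c i c'

/-- Monomer `i` is blocked in `c`: nonzero state, but no applicable rule. -/
def Blocked {n : ℕ} (c : Config n) (i : ℕ) : Prop :=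
  i < n ∧ c.st i ≠ 0 ∧ ¬ Applicable c i

/-- One asynchronous step of the machine. -/
def Step {n : ℕ} (c c' : Config n) : Prop := ∃ i, StepAt c i c'

/-- `c` is reachable from `c₀` by a finite sequence of rule applications. -/
def Reachable {n : ℕ} (c₀ c : Config n) : Prop := Relation.ReflTransGen Step c₀ c

/-- No rule is applicable in `c`. -/
def Terminal {n : ℕ} (c : Config n) : Prop := ∀ i, ¬ Applicable c i

/-- `c` is permanently blocked: some state is nonzero but no monomer admits an applicable rule. -/
def PermBlocked {n : ℕ} (c : Config n) : Prop :=
  (∃ i < n, c.st i ≠ 0) ∧ Terminal c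

/-- The Turning Machine with initial configuration `c₀` computes the target configuration `ct`:
every maximal sequence of rule applications from `c₀` is finite and ends in `ct`
(configurations are compared on the meaningful indices `< n`). -/
def Computes {n : ℕ} (c₀ ct : Config n) : Prop :=
  (¬ ∃ f : ℕ → Config n, f 0 = c₀ ∧ ∀ k, Step (f k) (f (k + 1))) ∧
  ∀ c, Reachable c₀ c → Terminal c → ∀ i < n, c.st i = ct.st i ∧ c.pos i = ct.pos i

/-- The initial configuration with monomers on the x-axis, `pos m_i = (i,0)`, and
initial states `s₀`. -/
def mkInit (n : ℕ) (s₀ : ℕ → ℤ) : Config n where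
  st := s₀
  pos := fun i => ((i : ℤ), 0)
  pos_zero := by simp
  step_unit := by
    intro i _
    have h : (((i + 1 : ℕ) : ℤ), (0 : ℤ)) - (((i : ℕ) : ℤ), (0 : ℤ)) = ((1 : ℤ), (0 : ℤ)) := by
      simp only [Prod.mk_sub_mk, Prod.mk.injEq]
      constructor <;> push_cast <;> ring
    rw [h]
    simp [unitVecs]
  pos_inj := by
    intro i _ j _ h
    have h1 : ((i : ℕ) : ℤ) = ((j : ℕ) : ℤ) := congrArg Prod.fst h
    exact_mod_cast h1

/-- The initial configuration of the line-rotating Turning Machine `L^σ_n`: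
`pos m_i = (i,0)`, states `σ` except the last monomer which has state `0`. -/
def lineInit (n : ℕ) (σ : ℤ) : Config n :=
  mkInit n (fun i => if i + 1 = n then 0 else σ)

/-- `Δs`: the number of rule applications made to monomer `i` on the way from `c₀` to `c`
(each application changes the state by one, towards `0`). -/
def dS {n : ℕ} (c₀ c : Config n) (i : ℕ) : ℤ := |c₀.st i - c.st i|

/-- The set of positions occupied by a configuration. -/
def posSet {n : ℕ} (c : Config n) : Set Pt := {q | ∃ i < n, c.pos i = q}


/-- Adjacency on the triangular grid. -/
def Adj (p q : Pt) : Prop := q - p ∈ unitVecs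

/-- The graph induced by the edge relation `E` on the set `S` is connected. -/
def ConnectedIn (E : Pt → Pt → Prop) (S : Set Pt) : Prop :=
  ∀ p ∈ S, ∀ q ∈ S, Relation.ReflTransGen (fun a b => a ∈ S ∧ b ∈ S ∧ E a b) p q

/-- A shape: a finite subset of the grid whose induced graph is connected. -/
def IsShape (S : Set Pt) : Prop := S.Finite ∧ ConnectedIn Adj S

/-- `y`-monotone shape: the points of each row form a set of consecutive integers. -/
def YMonotone (S : Set Pt) : Prop :=
  ∀ j x₁ x₂ x₃ : ℤ, x₁ ≤ x₂ → x₂ ≤ x₃ → (x₁, j) ∈ S → (x₃, j) ∈ S → (x₂, j) ∈ S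

/-- Adjacency along the `x` and `y` axes only. -/
def AdjXY (p q : Pt) : Prop :=
  q - p ∈ ({((1 : ℤ), (0 : ℤ)), (-1, 0), (0, 1), (0, -1)} : Set Pt)

/-- `xy`-connected: connected using only `±x` and `±y` edges. -/
def XYConnected (S : Set Pt) : Prop := ConnectedIn AdjXY S

/-- The perimeter of a shape: its points having a neighbour outside the shape. -/
def perimeter (S : Set Pt) : Set Pt := {p ∈ S | ∃ v ∈ unitVecs, p + v ∉ S}

/-- Translation of a set of points. -/
def translate (t : Pt) (S : Set Pt) : Set Pt := (fun p => p + t) '' S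

/-- The cardinality of the symmetric difference of two sets of points. -/
noncomputable def symmDiffCard (A B : Set Pt) : ℕ := ((A \ B) ∪ (B \ A)).ncard

/-- Error of a configuration w.r.t. a shape: the least cardinality, over all translations `t`,
of the symmetric difference of `S + t` and the set of monomer positions. -/
noncomputable def foldError {n : ℕ} (S : Set Pt) (c : Config n) : ℕ :=
  sInf {m | ∃ t : Pt, symmDiffCard (translate t S) (posSet c) = m}

/-- The allowed steps of a `yw`-chain. -/
def ywSteps : Set Pt := {((0 : ℤ), (1 : ℤ)), (-1, 1)}

/-- `c 0, …, c (k-1)` is a `yw`-separator of the `y`-monotone shape `S`: a `yw`-chain inside `S`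
from the bottommost row of `S` to the topmost row of `S`. -/
def IsYWSep (S : Set Pt) (k : ℕ) (c : ℕ → Pt) : Prop :=
  0 < k ∧ (∀ ℓ, ℓ + 1 < k → c (ℓ + 1) - c ℓ ∈ ywSteps) ∧ (∀ ℓ < k, c ℓ ∈ S) ∧
    (∀ p ∈ S, (c 0).2 ≤ p.2) ∧ (∀ p ∈ S, p.2 ≤ (c (k - 1)).2)

/-- The shape `S` scaled by a factor `2`. -/
def scale2 (S : Set Pt) : Set Pt :=
  {q | ∃ p ∈ S, ∃ a b : ℤ, (a = 0 ∨ a = 1) ∧ (b = 0 ∨ b = 1) ∧ q = (2 * p.1 + a, 2 * p.2 + b)}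

/-- The right boundary of a shape: the rightmost point of each nonempty row. -/
def rightBdry (S : Set Pt) : Set Pt := {p ∈ S | ∀ q ∈ S, q.2 = p.2 → q.1 ≤ p.1}

/-- The left boundary of a shape: the leftmost point of each nonempty row. -/
def leftBdry (S : Set Pt) : Set Pt := {p ∈ S | ∀ q ∈ S, q.2 = p.2 → p.1 ≤ q.1}

/-- The "almost rectangle" `R_{k'}` from the definition of the `1`-gap spiral. -/
def spiralRing (k : ℤ) : Set Pt :=
  (({p : Pt | (p.2 = 2 * k ∨ p.2 = -(2 * k)) ∧ -(2 * k) ≤ p.1 ∧ p.1 ≤ 2 * k - 1} ∪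
      {p : Pt | (p.1 = -(2 * k) ∨ p.1 = 2 * k - 1) ∧ -(2 * k) ≤ p.2 ∧ p.2 ≤ 2 * k}) ∪
      {(2 * k - 2, -(2 * k) + 2), (2 * k, -(2 * k)), (2 * k + 1, -(2 * k))}) \
    {(2 * k - 1, -(2 * k) + 1)}

/-- The `k`-turn `1`-gap spiral `S_k`. -/
def spiral (k : ℕ) : Set Pt := ⋃ j ∈ Finset.Icc 1 k, spiralRing (j : ℤ)

/-- The base turning numbers `t_i` of the inside-to-outside sequence. -/
def tIn (t0 : ℤ) : ℕ → ℤ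
  | 0 => t0
  | i + 1 => tIn t0 i + (if (i + 1) % 2 = 0 then 2 else 1)

/-- The inside-to-outside turning number sequence
`T_in(t₀) = [t₀]¹,[t₁]²,…,[t_{4k}]^{4k+1}, t_{4k}`. -/
def TInList (k : ℕ) (t0 : ℤ) : List ℤ :=
  ((List.range (4 * k + 1)).flatMap fun i => List.replicate (i + 1) (tIn t0 i)) ++ [tIn t0 (4 * k)]

/-- The base turning numbers `t_i` of the outside-to-inside sequence. -/
def tOut (t0 : ℤ) : ℕ → ℤ
  | 0 => t0
  | i + 1 => tOut t0 i - (if (i + 1) % 2 = 0 then 1 else 2)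

/-- The outside-to-inside turning number sequence
`T_out(t₀) = t₀,[t₀]^{4k+1},[t₁]^{4k},…,[t_{4k}]¹`. -/
def TOutList (k : ℕ) (t0 : ℤ) : List ℤ :=
  t0 :: ((List.range (4 * k + 1)).flatMap fun i => List.replicate (4 * k + 1 - i) (tOut t0 i))

/-- The cross shape with arm length `a`. -/
def cross (a : ℤ) : Set Pt :=
  {p : Pt | p.2 = 0 ∧ -a ≤ p.1 ∧ p.1 ≤ a} ∪ {p : Pt | p.1 = 0 ∧ -a ≤ p.2 ∧ p.2 ≤ a}

/-- A positive zig-zag path: pairwise distinct points with steps in `{x, -x, y, w}`. -/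
def PosZigZag (n : ℕ) (p : ℕ → Pt) : Prop :=
  (∀ i < n, ∀ j < n, p i = p j → i = j) ∧
    ∀ i, i + 1 < n → p (i + 1) - p i ∈ ({((1 : ℤ), (0 : ℤ)), (-1, 0), (0, 1), (-1, 1)} : Set Pt)

/-- A negative zig-zag path: pairwise distinct points with steps in `{x, -x, -y, -w}`. -/
def NegZigZag (n : ℕ) (p : ℕ → Pt) : Prop :=
  (∀ i < n, ∀ j < n, p i = p j → i = j) ∧
    ∀ i, i + 1 < n → p (i + 1) - p i ∈ ({((1 : ℤ), (0 : ℤ)), (-1, 0), (0, -1), (1, -1)} : Set Pt)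


/-! A rule application at `m_i` adds one to `Δs(m_i)` and rotates `d_i` by `ρ`, leaving the other
directions unchanged (since `d + ρ²d = ρd`).  Starting from the straight line, every direction is
therefore `d_k = ρ^{Δs(m_k)}(x)`, so `d_k = ρ^{Δs(m_k) - Δs(m_{k-1})}(d_{k-1})`.  The difference
`Δs(m_k) - Δs(m_{k-1})` starts at `0` and changes by at most one per step; it can never reach
`±3`, as `ρ^{±3}` reverses `d_{k-1}` and would put `m_{k+1}` onto `m_{k-1}`.  Uniqueness of the turn
angle holds because `ρ` has order `6` on nonzero vectors, and the sum formula telescopes. -/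

lemma sum_Icc_sub_pred {G : Type*} [AddCommGroup G] (f : ℕ → G) {i j : ℕ} (hij : i ≤ j) :
    ∑ k ∈ Finset.Icc (i + 1) j, (f k - f (k - 1)) = f j - f i := by
  rw [← Finset.Ico_add_one_right_eq_Icc, ← Finset.sum_Ico_add']
  simpa only [Nat.add_sub_cancel] using Finset.sum_Ico_sub f hij

lemma rotE_apply (p : Pt) : rotE p = (-p.2, p.1 + p.2) := rfl

lemma rotE_pow_six : rotE ^ 6 = 1 := by
  ext p <;> simp [pow_succ, rotE_apply]

lemma rotE_zpow_emod_six (t : ℤ) : rotE ^ (t % 6) = rotE ^ t :=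
  (zpow_eq_zpow_emod' t rotE_pow_six).symm

lemma rotE_zpow_three_apply (p : Pt) : (rotE ^ (3 : ℤ)) p = -p := by
  ext <;> simp [pow_succ, rotE_apply]

lemma rotE_zpow_neg_three_apply (p : Pt) : (rotE ^ (-3 : ℤ)) p = -p := by
  rw [← rotE_zpow_emod_six, show (-3 : ℤ) % 6 = 3 by norm_num, rotE_zpow_three_apply]

lemma six_dvd_of_rotE_zpow_apply_eq_self {p : Pt} (hp : p ≠ 0) {t : ℤ}
    (h : (rotE ^ t) p = p) : 6 ∣ t := by
  obtain ⟨a, b⟩ := p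
  rw [Ne, Prod.mk_eq_zero] at hp
  rw [← rotE_zpow_emod_six] at h
  have : 0 ≤ t % 6 := Int.emod_nonneg t (by norm_num)
  have : t % 6 < 6 := Int.emod_lt_of_pos t (by norm_num)
  interval_cases h' : t % 6 <;> simp [pow_succ, rotE_apply, Prod.ext_iff] at h <;> omega

lemma rotE_zpow_apply_injective {p : Pt} (hp : p ≠ 0) {t t' : ℤ} (hlt : |t - t'| < 6)
    (h : (rotE ^ t) p = (rotE ^ t') p) : t = t' := by
  have hfix : (rotE ^ (t - t')) p = p := by
    have := congrArg (rotE ^ (-t')) h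
    rwa [← Equiv.Perm.mul_apply, ← Equiv.Perm.mul_apply, ← zpow_add, ← zpow_add, neg_add_cancel,
      zpow_zero, Equiv.Perm.one_apply, neg_add_eq_sub] at this
  obtain ⟨m, hm⟩ := six_dvd_of_rotE_zpow_apply_eq_self hp hfix
  have := abs_lt.mp hlt
  omega

lemma add_rot_rot (d : Pt) : d + rot (rot d) = rot d := by
  ext <;> simp only [rot, Prod.fst_add, Prod.snd_add] <;> ring

section Config

variable {n : ℕ}

lemma dir_ne_zero (c : Config n) {k : ℕ} (hk : k + 1 < n) : dir c k ≠ 0 := fun h =>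
  absurd (c.pos_inj _ hk _ (by omega) (sub_eq_zero.mp h)) (by omega)

lemma dir_ne_neg_dir_pred (c : Config n) {k : ℕ} (h1 : 1 ≤ k) (hk : k + 1 < n) :
    dir c k ≠ -dir c (k - 1) := by
  intro h
  rw [dir, dir, Nat.sub_add_cancel h1, neg_sub, sub_left_inj] at h
  exact absurd (c.pos_inj _ hk _ (by omega) h) (by omega)

variable {b c' : Config n} {i : ℕ}

lemma StepAt.st_eq (h : StepAt b i c') (hi : 0 < b.st i) {j : ℕ} (hj : j < n) :
    c'.st j = if j = i then b.st i - 1 else b.st j := by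
  rw [h.2.2.1 j hj, nextSt, if_pos hi]

lemma StepAt.dir_eq (h : StepAt b i c') (hi : 0 < b.st i) {k : ℕ} (hk : k + 1 < n) :
    dir c' k = if k = i then rotE (dir b k) else dir b k := by
  rw [dir, h.2.2.2 _ hk, h.2.2.2 _ (by omega), nextPos, nextPos, delta, if_pos hi]
  rcases lt_trichotomy k i with hki | rfl | hki
  · simp only [if_neg (by omega : ¬i < k + 1), if_neg (by omega : ¬i < k), hki.ne, if_false, dir]
  · simp only [lt_add_one, lt_irrefl, if_true, if_false]
    rw [show b.pos (k + 1) + rot (rot (dir b k)) - b.pos k = dir b k + rot (rot (dir b k)) by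
      rw [dir]; abel, add_rot_rot, rotE_apply]
    rfl
  · simp only [if_pos (by omega : i < k + 1), if_pos hki, hki.ne', if_false, dir]
    abel

end Config

section Reachable

variable {n : ℕ} {s₀ : ℕ → ℤ} {c b c' : Config n} {i k : ℕ}

lemma Reachable.st_mem_Icc (hs : ∀ i < n, 0 ≤ s₀ i) (hc : Reachable (mkInit n s₀) c)
    (hk : k < n) : c.st k ∈ Set.Icc 0 (s₀ k) := by
  induction hc generalizing k with
  | refl => exact ⟨hs k hk, le_rfl⟩
  | tail _ hstep ih =>
    obtain ⟨i, h⟩ := hstep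
    have hi := lt_of_le_of_ne (ih h.1).1 (Ne.symm h.2.1)
    obtain ⟨hk₀, hk₁⟩ := ih hk
    rw [h.st_eq hi hk]
    split_ifs with hki
    · subst hki; exact ⟨by omega, by omega⟩
    · exact ⟨hk₀, hk₁⟩

lemma Reachable.st_pos_of_stepAt (hs : ∀ i < n, 0 ≤ s₀ i) (hb : Reachable (mkInit n s₀) b)
    (h : StepAt b i c') : 0 < b.st i :=
  lt_of_le_of_ne (hb.st_mem_Icc hs h.1).1 (Ne.symm h.2.1)

lemma Reachable.dS_eq (hs : ∀ i < n, 0 ≤ s₀ i) (hc : Reachable (mkInit n s₀) c) (hk : k < n) :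
    dS (mkInit n s₀) c k = s₀ k - c.st k :=
  abs_of_nonneg (sub_nonneg.mpr (hc.st_mem_Icc hs hk).2)

lemma Reachable.dS_stepAt (hs : ∀ i < n, 0 ≤ s₀ i) (hb : Reachable (mkInit n s₀) b)
    (h : StepAt b i c') (hk : k < n) :
    dS (mkInit n s₀) c' k = dS (mkInit n s₀) b k + if k = i then 1 else 0 := by
  have hc' : Reachable (mkInit n s₀) c' := hb.tail ⟨i, h⟩
  rw [hc'.dS_eq hs hk, hb.dS_eq hs hk, h.st_eq (Reachable.st_pos_of_stepAt hs hb h) hk]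
  split_ifs with hki
  · subst hki; ring
  · rw [add_zero]

lemma Reachable.dir_eq (hs : ∀ i < n, 0 ≤ s₀ i) (hc : Reachable (mkInit n s₀) c)
    (hk : k + 1 < n) : dir c k = (rotE ^ dS (mkInit n s₀) c k) (1, 0) := by
  induction hc with
  | refl => simp [dS, dir, mkInit]
  | @tail b c' hb hstep ih =>
    obtain ⟨i, h⟩ := hstep
    rw [Reachable.dS_stepAt hs hb h (by omega), h.dir_eq (Reachable.st_pos_of_stepAt hs hb h) hk, ih]
    split_ifs
    · rw [add_comm, zpow_add, zpow_one, Equiv.Perm.mul_apply]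
    · rw [add_zero]

lemma Reachable.dir_eq_rotE_zpow_dir_pred (hs : ∀ i < n, 0 ≤ s₀ i)
    (hc : Reachable (mkInit n s₀) c) (h1 : 1 ≤ k) (hk : k + 1 < n) :
    dir c k = (rotE ^ (dS (mkInit n s₀) c k - dS (mkInit n s₀) c (k - 1))) (dir c (k - 1)) := by
  rw [hc.dir_eq hs hk, hc.dir_eq hs (by omega), ← Equiv.Perm.mul_apply, ← zpow_add,
    sub_add_cancel]

lemma Reachable.abs_dS_sub_dS_pred_le (hs : ∀ i < n, 0 ≤ s₀ i) (hc : Reachable (mkInit n s₀) c)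
    (h1 : 1 ≤ k) (hk : k + 1 < n) :
    |dS (mkInit n s₀) c k - dS (mkInit n s₀) c (k - 1)| ≤ 2 := by
  induction hc with
  | refl => simp [dS]
  | @tail b c' hb hstep ih =>
    obtain ⟨i, h⟩ := hstep
    have hc' : Reachable (mkInit n s₀) c' := hb.tail ⟨i, h⟩
    have hturn := hc'.dir_eq_rotE_zpow_dir_pred hs h1 hk
    have hne_three : dS (mkInit n s₀) c' k - dS (mkInit n s₀) c' (k - 1) ≠ 3 := fun h3 =>
      dir_ne_neg_dir_pred c' h1 hk (by rwa [h3, rotE_zpow_three_apply] at hturn)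
    have hne_neg_three : dS (mkInit n s₀) c' k - dS (mkInit n s₀) c' (k - 1) ≠ -3 := fun h3 =>
      dir_ne_neg_dir_pred c' h1 hk (by rwa [h3, rotE_zpow_neg_three_apply] at hturn)
    have hprev := abs_le.mp ih
    have hΔ := Reachable.dS_stepAt hs hb h (k := k) (by omega)
    have hΔ_pred := Reachable.dS_stepAt hs hb h (k := k - 1) (by omega)
    rw [abs_le]
    split_ifs at hΔ hΔ_pred <;> omega

end Reachable

/-- For a Turning Machine with initial positions `(i,0)` and nonnegative
initial states, in any reachable configuration each `d_k` (`1 ≤ k ≤ n-2`) is obtained from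
`d_{k-1}` by a unique rotation `ρ^{t_k}` with `-2 ≤ t_k ≤ 2`, and these turn angles satisfy
`Δs(m_j) - Δs(m_i) = ∑_{k=i+1}^{j} t_k`. -/
theorem turn_angle_state_relation (n : ℕ) (s₀ : ℕ → ℤ) (hs : ∀ i < n, 0 ≤ s₀ i)
    (c : Config n) (hc : Reachable (mkInit n s₀) c) :
    (∀ k, 1 ≤ k → k + 1 < n →
      ∃! t : ℤ, -2 ≤ t ∧ t ≤ 2 ∧ dir c k = (rotE ^ t) (dir c (k - 1))) ∧
    ∀ t : ℕ → ℤ,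
      (∀ k, 1 ≤ k → k + 1 < n →
        -2 ≤ t k ∧ t k ≤ 2 ∧ dir c k = (rotE ^ t k) (dir c (k - 1))) →
      ∀ i j, i < j → j + 1 < n →
        dS (mkInit n s₀) c j - dS (mkInit n s₀) c i = ∑ k ∈ Finset.Icc (i + 1) j, t k := by
  have hbound := fun k (h1 : 1 ≤ k) (hk : k + 1 < n) =>
    abs_le.mp (hc.abs_dS_sub_dS_pred_le hs h1 hk)
  have hdir := fun k (h1 : 1 ≤ k) (hk : k + 1 < n) => hc.dir_eq_rotE_zpow_dir_pred hs h1 hk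
  set Δ := dS (mkInit n s₀) c
  have hturn : ∀ k, 1 ≤ k → k + 1 < n → ∀ t : ℤ, -2 ≤ t → t ≤ 2 →
      dir c k = (rotE ^ t) (dir c (k - 1)) → t = Δ k - Δ (k - 1) := by
    intro k h1 hk t ht₁ ht₂ ht
    have := hbound k h1 hk
    refine rotE_zpow_apply_injective (dir_ne_zero c (k := k - 1) (by omega))
      (abs_lt.mpr ⟨by omega, by omega⟩) ?_
    rw [← ht, ← hdir k h1 hk]
  refine ⟨fun k h1 hk => ⟨Δ k - Δ (k - 1), ⟨(hbound k h1 hk).1, (hbound k h1 hk).2, hdir k h1 hk⟩,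
    fun t ht => hturn k h1 hk t ht.1 ht.2.1 ht.2.2⟩, fun t ht i j hij hj => ?_⟩
  have ht_eq : ∀ k ∈ Finset.Icc (i + 1) j, t k = Δ k - Δ (k - 1) := fun k hk => by
    obtain ⟨hk₁, hk₂⟩ := Finset.mem_Icc.mp hk
    obtain ⟨ht₁, ht₂, ht₃⟩ := ht k (by omega) (by omega)
    exact hturn k (by omega) (by omega) (t k) ht₁ ht₂ ht₃
  rw [Finset.sum_congr rfl ht_eq, sum_Icc_sub_pred Δ hij.le]

end TuringMachineFolding
end

section
/- For every n ∈ ℕ with n ≥ 7, the line-rotating Turning Machine L⁶_n has a reachable configuration that is permanently blocked; consequently L⁶_n does not compute its target configuration (a full 2π line rotation is impossible). -/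
/-!
Turning a monomer `m_i` with positive state rotates its tail about `m_i` by `π/3`, so a
configuration reached from `L⁶_n` is described by how often each monomer has been turned.
Turning from the tail end first, in six sweeps `n - 2, n - 3, …` down to `1, 1, 2, 3, 4, 5`,
reaches the turning numbers `0, 2, 3, 4, 5, 6, …, 6`: then `m₁, …, m₆` surround `m₀`, the
monomers `m₀, …, m₄` still have positive states, and turning any of them would push a monomer
onto `m₀`. During the `k`-th sweep the chain is a fixed prefix followed by steps in the two
adjacent directions `ρ^(k-1) x, ρ^k x`, so a suitable linear functional strictly increases along
the tail and the chain stays self-avoiding.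
-/

namespace TuringMachineFolding

lemma injOn_of_strictMonoOn_tail {α β : Type*} [LinearOrder β] {p : ℕ → α} (g : α → β)
    {A n : ℕ} (hhead : Set.InjOn p (Set.Iic A)) (hle : ∀ i ≤ A, g (p i) ≤ g (p A))
    (hmono : StrictMonoOn (g ∘ p) (Set.Ico A n)) : Set.InjOn p (Set.Iio n) := by
  suffices ∀ i i', i < i' → i' < n → p i ≠ p i' by
    intro i hi i' hi' e
    rcases lt_trichotomy i i' with hlt | rfl | hlt
    · exact absurd e (this i i' hlt hi')
    · rfl
    · exact absurd e.symm (this i' i hlt hi)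
  intro i i' hii' hi' e
  by_cases hA : i' ≤ A
  · exact hii'.ne (hhead (show i ≤ A by omega) hA e)
  have hgA : g (p A) < g (p i') := hmono ⟨le_rfl, by omega⟩ ⟨by omega, hi'⟩ (by omega)
  by_cases hiA : i ≤ A
  · exact (hle i hiA).not_gt (e ▸ hgA)
  · exact (hmono ⟨by omega, by omega⟩ ⟨by omega, hi'⟩ hii').ne (congrArg g e)

lemma not_applicable_of_collision {n : ℕ} (c : Config n) {i j w : ℕ} (hji : j ≤ i) (hiw : i < w)
    (hw : w < n) (h : c.pos w + delta c i = c.pos j) : ¬ Applicable c i := by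
  rintro ⟨c', -, -, -, hpos⟩
  have hw' : c'.pos w = c'.pos j := by
    rw [hpos w hw, hpos j (by omega), nextPos, nextPos, if_pos hiw, if_neg (by omega), h]
  exact absurd (c'.pos_inj w hw j (by omega) hw') (by omega)

lemma not_computes_of_permBlocked {n : ℕ} {c₀ c ct : Config n} (hr : Reachable c₀ c)
    (hb : PermBlocked c) (hct : ∀ i < n, ct.st i = 0) : ¬ Computes c₀ ct := by
  rintro ⟨-, hterm⟩
  obtain ⟨i, hi, hne⟩ := hb.1
  exact hne ((hterm c hr hb.2 i hi).1.trans (hct i hi))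

def unitDir (s : ℕ) : Pt := rot^[s] (1, 0)

lemma unitDir_succ (s : ℕ) : unitDir (s + 1) = rot (unitDir s) :=
  Function.iterate_succ_apply' rot s (1, 0)

lemma rot_mem_unitVecs {p : Pt} (h : p ∈ unitVecs) : rot p ∈ unitVecs := by
  simp only [unitVecs, Set.mem_insert_iff, Set.mem_singleton_iff] at h ⊢
  rcases h with rfl | rfl | rfl | rfl | rfl | rfl <;> simp [rot]

lemma unitDir_mem_unitVecs (s : ℕ) : unitDir s ∈ unitVecs := by
  induction s with
  | zero => simp [unitDir, unitVecs]
  | succ s ih => rw [unitDir_succ]; exact rot_mem_unitVecs ih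

lemma rot_rot_eq_rot_sub (p : Pt) : rot (rot p) = rot p - p := by
  ext <;> simp only [rot, Prod.fst_sub, Prod.snd_sub] <;> ring

def turnPath (t : ℕ → ℕ) (i : ℕ) : Pt := ∑ l ∈ Finset.range i, unitDir (t l)

lemma turnPath_zero (t : ℕ → ℕ) : turnPath t 0 = 0 := Finset.sum_range_zero _

lemma turnPath_succ (t : ℕ → ℕ) (i : ℕ) : turnPath t (i + 1) = turnPath t i + unitDir (t i) :=
  Finset.sum_range_succ _ i

lemma turnPath_congr {t t' : ℕ → ℕ} {i : ℕ} (h : ∀ l < i, t l = t' l) :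
    turnPath t i = turnPath t' i :=
  Finset.sum_congr rfl fun l hl => by rw [h l (Finset.mem_range.mp hl)]

lemma turnPath_update_of_le {t : ℕ → ℕ} {i₀ j : ℕ} (s : ℕ) (hj : j ≤ i₀) :
    turnPath (Function.update t i₀ s) j = turnPath t j :=
  turnPath_congr fun l hl => Function.update_of_ne (by omega) _ _

lemma turnPath_update_of_lt {t : ℕ → ℕ} {i₀ j : ℕ} (s : ℕ) (hj : i₀ < j) :
    turnPath (Function.update t i₀ s) j = turnPath t j + (unitDir s - unitDir (t i₀)) := by
  have hmem : i₀ ∈ Finset.range j := Finset.mem_range.mpr hj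
  unfold turnPath
  rw [← Finset.add_sum_erase _ _ hmem, ← Finset.add_sum_erase _ _ hmem,
    Finset.sum_congr rfl fun l hl => by rw [Function.update_of_ne (Finset.ne_of_mem_erase hl)]]
  rw [Function.update_self]
  abel

/-- The configuration reached from `L^σ_n` after turning each monomer `i` exactly `t i` times:
each turn of `m_i` rotates `d_i` by `π/3` and leaves all other directions unchanged. -/
def turnConf (n σ : ℕ) (t : ℕ → ℕ) (h : Set.InjOn (turnPath t) (Set.Iio n)) : Config n where
  st i := if i + 1 = n then 0 else (σ : ℤ) - t i
  pos := turnPath t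
  pos_zero := turnPath_zero t
  step_unit i _ := by
    rw [turnPath_succ, add_sub_cancel_left]
    exact unitDir_mem_unitVecs _
  pos_inj _ hi _ hj := fun e => h hi hj e

lemma turnConf_congr {n σ : ℕ} {t t' : ℕ → ℕ} (e : t = t') (h h') :
    turnConf n σ t h = turnConf n σ t' h' := by
  subst e; rfl

lemma lineInit_eq_turnConf (n σ : ℕ) :
    ∃ h, lineInit n σ = turnConf n σ (fun _ => 0) h := by
  have hpos : ∀ i, turnPath (fun _ => 0) i = ((i : ℤ), 0) := by
    intro i
    induction i with
    | zero => rfl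
    | succ i ih => rw [turnPath_succ, ih]; ext <;> simp [unitDir]
  refine ⟨fun i _ j _ e => ?_, ?_⟩
  · simpa [hpos] using e
  unfold lineInit mkInit turnConf
  congr 1
  exact funext fun i => (hpos i).symm

lemma turnConf_st_pos {n σ : ℕ} {t : ℕ → ℕ} {h} {i : ℕ} (hi : i + 1 < n) (hσ : t i < σ) :
    0 < (turnConf n σ t h).st i := by
  simp only [turnConf, if_neg (show i + 1 ≠ n by omega)]
  omega

lemma delta_turnConf {n σ : ℕ} {t : ℕ → ℕ} {h} {i : ℕ} (hi : i + 1 < n) (hσ : t i < σ) :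
    delta (turnConf n σ t h) i = unitDir (t i + 2) := by
  rw [delta, if_pos (turnConf_st_pos hi hσ), unitDir_succ, unitDir_succ]
  simp only [dir, turnConf, turnPath_succ, add_sub_cancel_left]

-- `ρ²(d) = ρ(d) - d`, so translating the tail by `ρ²(d_i)` turns `d_i` into `ρ(d_i)`.
lemma stepAt_turnConf {n σ : ℕ} {t : ℕ → ℕ} {i : ℕ} (hi : i + 1 < n) (hσ : t i < σ) (h h') :
    StepAt (turnConf n σ t h) i (turnConf n σ (Function.update t i (t i + 1)) h') := by
  have hst := turnConf_st_pos (h := h) hi hσ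
  refine ⟨by omega, hst.ne', fun j _ => ?_, fun j _ => ?_⟩
  · simp only [nextSt, if_pos hst]
    by_cases hji : j = i
    · subst hji
      simp only [turnConf, Function.update_self, if_neg (show j + 1 ≠ n by omega)]
      push_cast; ring
    · simp [turnConf, hji]
  · simp only [nextPos]
    split_ifs with hij
    · rw [delta_turnConf hi hσ, unitDir_succ, unitDir_succ, rot_rot_eq_rot_sub, ← unitDir_succ]
      exact turnPath_update_of_lt _ hij
    · exact turnPath_update_of_le _ (by omega)

/-- Turning monomers `n - 2, n - 3, …, A` once each, in this order. -/
theorem reachable_sweep {n σ A : ℕ} {c₀ : Config n} {s s' : ℕ → ℕ} (hAn : A < n)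
    (hs' : ∀ l, s' l = if A ≤ l ∧ l + 1 < n then s l + 1 else s l)
    (hσ : ∀ l, A ≤ l → l + 1 < n → s l < σ)
    (hinj : ∀ j, A ≤ j → Set.InjOn (turnPath fun i => if j ≤ i then s' i else s i) (Set.Iio n))
    (hs : ∃ h, Reachable c₀ (turnConf n σ s h)) : ∃ h', Reachable c₀ (turnConf n σ s' h') := by
  obtain ⟨h, hs⟩ := hs
  set mix : ℕ → ℕ → ℕ := fun j i => if j ≤ i then s' i else s i with hmix
  have mix_top : mix (n - 1) = s := by
    funext i; simp only [hmix, hs']; split_ifs <;> omega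
  have mix_bot : mix A = s' := by
    funext i; simp only [hmix, hs']; split_ifs <;> omega
  have mix_succ : ∀ j, A ≤ j → j + 1 < n →
      mix j = Function.update (mix (j + 1)) j (mix (j + 1) j + 1) := by
    intro j _ _
    funext i
    rcases eq_or_ne i j with rfl | hij
    · simp only [hmix, hs', Function.update_self]; split_ifs <;> omega
    · simp only [hmix, Function.update_of_ne hij]; split_ifs <;> omega
  have reach_mix : ∀ j (hj : A ≤ j), j ≤ n - 1 →
      Reachable c₀ (turnConf n σ (mix j) (hinj j hj)) := by
    intro j hAj hj
    induction hj using Nat.decreasingInduction with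
    | self => rwa [turnConf_congr mix_top]
    | of_succ j hj ih =>
      refine (ih (by omega)).tail ⟨j, ?_⟩
      rw [turnConf_congr (mix_succ j hAj (by omega)) _
        (by rw [← mix_succ j hAj (by omega)]; exact hinj j hAj)]
      refine stepAt_turnConf (by omega) ?_ _ _
      simp only [hmix, if_neg (show ¬ j + 1 ≤ j by omega)]
      exact hσ j hAj (by omega)
  refine ⟨mix_bot ▸ hinj A le_rfl, ?_⟩
  rw [← turnConf_congr mix_bot]
  exact reach_mix A le_rfl (by omega)

/-- In the blocked configuration `m₁, …, m₆` occupy the six neighbours of `m₀`. -/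
def blockedTurns (i : ℕ) : ℕ := if i = 0 then 0 else min (i + 1) 6

def sweepStart (k : ℕ) : ℕ := max (k - 1) 1

/-- A linear functional (paired with `dotPt`) that increases along both directions
`ρ^(k-1) x` and `ρ^k x` occurring beyond `sweepStart k` during the `k`-th sweep. -/
def sweepWeight : ℕ → Pt
  | 1 => (1, 1)
  | 2 => (0, 1)
  | 3 => (-1, 0)
  | 4 => (-1, -1)
  | 5 => (0, -1)
  | _ => (1, -1)

def dotPt (w v : Pt) : ℤ := w.1 * v.1 + w.2 * v.2

lemma dotPt_add (w u v : Pt) : dotPt w (u + v) = dotPt w u + dotPt w v := by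
  simp only [dotPt, Prod.fst_add, Prod.snd_add]; ring

lemma sweep_certificate : ∀ k ∈ Finset.Icc 1 6,
    (∀ i ≤ sweepStart k, ∀ i' ≤ sweepStart k,
      turnPath blockedTurns i = turnPath blockedTurns i' → i = i') ∧
    (∀ i ≤ sweepStart k, dotPt (sweepWeight k) (turnPath blockedTurns i) ≤
      dotPt (sweepWeight k) (turnPath blockedTurns (sweepStart k))) ∧
    0 < dotPt (sweepWeight k) (unitDir (k - 1)) ∧ 0 < dotPt (sweepWeight k) (unitDir k) := by
  decide

-- Turning `m_i` would push `m_{i+1}` (for `i = 0`, `m₆`) onto `m₀`.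
lemma turnPath_blockedTurns_collision : ∀ i ≤ 4,
    turnPath blockedTurns (if i = 0 then 6 else i + 1) + unitDir (blockedTurns i + 2) = 0 := by
  decide

def stageTurns (n k i : ℕ) : ℕ := if i + 1 < n then min (blockedTurns i) k else 0

lemma injOn_turnPath_sweep {n k j : ℕ} (hn : 7 ≤ n) (hk : k ∈ Finset.Icc 1 6)
    (hj : sweepStart k ≤ j) :
    Set.InjOn (turnPath fun i => if j ≤ i then stageTurns n k i else stageTurns n (k - 1) i)
      (Set.Iio n) := by
  set t := fun i => if j ≤ i then stageTurns n k i else stageTurns n (k - 1) i with ht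
  obtain ⟨hk1, hk6⟩ := Finset.mem_Icc.mp hk
  have prefix_eq : ∀ i ≤ sweepStart k, turnPath t i = turnPath blockedTurns i :=
    fun i hi => turnPath_congr fun l hl => by
      simp only [ht, stageTurns, blockedTurns, sweepStart] at hi hj ⊢; split_ifs <;> omega
  have tail_mem : ∀ l, sweepStart k ≤ l → l + 1 < n → t l = k - 1 ∨ t l = k := by
    intro l hl hln
    simp only [ht, stageTurns, blockedTurns, sweepStart] at hl hj ⊢; split_ifs <;> omega
  obtain ⟨hhead, hle, hpos₁, hpos₂⟩ := sweep_certificate k hk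
  refine injOn_of_strictMonoOn_tail (dotPt (sweepWeight k)) (A := sweepStart k) ?_ ?_ ?_
  · intro i hi i' hi' e
    rw [prefix_eq i hi, prefix_eq i' hi'] at e
    exact hhead i hi i' hi' e
  · intro i hi
    rw [prefix_eq i hi, prefix_eq _ le_rfl]
    exact hle i hi
  · refine strictMonoOn_of_lt_succ Set.ordConnected_Ico fun l _ hl hl' => ?_
    rw [Order.succ_eq_add_one] at hl' ⊢
    rw [Function.comp_apply, Function.comp_apply, turnPath_succ, dotPt_add]
    rcases tail_mem l hl.1 hl'.2 with h | h <;> rw [h] <;> omega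

lemma reachable_stageTurns {n : ℕ} (hn : 7 ≤ n) :
    ∀ k ≤ 6, ∃ h, Reachable (lineInit n 6) (turnConf n 6 (stageTurns n k) h) := by
  intro k hk
  induction k with
  | zero =>
    obtain ⟨h, e⟩ := lineInit_eq_turnConf n 6
    rw [Nat.cast_ofNat] at e
    have : stageTurns n 0 = fun _ => 0 := by funext i; simp [stageTurns]
    exact ⟨this ▸ h, by rw [turnConf_congr this _ h, ← e]; exact Relation.ReflTransGen.refl⟩
  | succ k ih =>
    have hk' : k + 1 ∈ Finset.Icc 1 6 := Finset.mem_Icc.mpr ⟨by omega, by omega⟩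
    refine reachable_sweep (A := sweepStart (k + 1)) (by simp only [sweepStart]; omega) ?_ ?_
      (fun j hj => injOn_turnPath_sweep hn hk' hj) (ih (by omega))
    · intro l
      simp only [stageTurns, blockedTurns, sweepStart]; split_ifs <;> omega
    · intro l hl _
      simp only [stageTurns]; split_ifs; omega

lemma permBlocked_stageTurns_six {n : ℕ} (hn : 7 ≤ n) (h) :
    PermBlocked (turnConf n 6 (stageTurns n 6) h) := by
  have stage_eq : ∀ l ≤ 5, stageTurns n 6 l = blockedTurns l := fun l hl => by
    simp only [stageTurns, blockedTurns]; split_ifs <;> omega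
  have hst₀ : (turnConf n 6 (stageTurns n 6) h).st 0 ≠ 0 := by
    simp only [turnConf, stageTurns, blockedTurns]; split_ifs <;> omega
  refine ⟨⟨0, by omega, hst₀⟩, fun i => ?_⟩
  by_cases hi : i ≤ 4
  · refine not_applicable_of_collision _ (j := 0) (w := if i = 0 then 6 else i + 1)
      (Nat.zero_le i) (by split_ifs <;> omega) (by split_ifs <;> omega) ?_
    have hσ : stageTurns n 6 i < 6 := by
      rw [stage_eq i (by omega)]; simp only [blockedTurns]; split_ifs <;> omega
    rw [delta_turnConf (by omega) hσ]
    simp only [turnConf]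
    rw [turnPath_zero, stage_eq i (by omega),
      turnPath_congr fun l hl => stage_eq l (by split_ifs at hl <;> omega)]
    exact turnPath_blockedTurns_collision i hi
  · rintro ⟨-, hin, hne, -⟩
    apply hne
    simp only [turnConf, stageTurns, blockedTurns]
    split_ifs <;> omega

/-- For every `n ≥ 7`, the line-rotating Turning Machine `L⁶_n` has a
reachable permanently blocked configuration; consequently it does not compute its target
configuration (a full `2π` line rotation is impossible). -/
theorem no_two_pi_rotation (n : ℕ) (hn : 7 ≤ n) :
    (∃ c : Config n, Reachable (lineInit n 6) c ∧ PermBlocked c) ∧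
    ∀ ct : Config n,
      (∀ i < n, ct.st i = 0) → (∀ i < n, ct.pos i = zsmulPt (i : ℤ) (rot^[6] (1, 0))) →
      ¬ Computes (lineInit n 6) ct := by
  obtain ⟨h, hr⟩ := reachable_stageTurns hn 6 le_rfl
  have hb := permBlocked_stageTurns_six hn h
  exact ⟨⟨_, hr, hb⟩, fun ct hct _ => not_computes_of_permBlocked hr hb hct⟩

end TuringMachineFolding
end
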